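/- (Matrix Hölder inequality for p=1, q=∞) For all square complex matrices A and B of the same size, |Tr(B†A)| ≤ ‖A‖_∞ · ‖B‖₁, where ‖A‖_∞ is the operator norm (largest singular value) and ‖B‖₁ = Tr|B| is the trace norm. -/

import Mathlib

open Matrix ComplexOrder
open scoped Matrix.Norms.L2Operator Kronecker

noncomputable section

/-- The positive semidefinite square root of a positive semidefinite matrix
(the definition removed from Mathlib, restored with its old meaning). -/
def Matrix.PosSemidef.sqrt {n 𝕜 : Type*} [Fintype n] [DecidableEq n] [RCLike 𝕜]
    {A : Matrix n n 𝕜} (hA : A.PosSemidef) : Matrix n n 𝕜 :=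
  hA.1.eigenvectorUnitary.1 * diagonal ((↑) ∘ (√·) ∘ hA.1.eigenvalues) *
  (star hA.1.eigenvectorUnitary : Matrix n n 𝕜)

variable {m : Type*} [Fintype m] [DecidableEq m]

/-- A density matrix: positive semidefinite with unit trace. -/
def IsDensity (ρ : Matrix m m ℂ) : Prop := ρ.PosSemidef ∧ ρ.trace = 1

/-- The trace norm `‖A‖₁ = Tr √(AᴴA)`. -/
def traceNorm (A : Matrix m m ℂ) : ℝ :=
  ((Matrix.posSemidef_conjTranspose_mul_self A).sqrt).trace.re

/-- The trace distance `T(ρ,σ) = ‖ρ − σ‖₁ / 2`. -/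
def traceDist (ρ σ : Matrix m m ℂ) : ℝ := traceNorm (ρ - σ) / 2

/-- The fidelity `F(ρ,σ) = ‖√ρ √σ‖₁`. -/
def fid {ρ σ : Matrix m m ℂ} (hρ : ρ.PosSemidef) (hσ : σ.PosSemidef) : ℝ :=
  traceNorm (hρ.sqrt * hσ.sqrt)

/-- The sign function applied to a Hermitian matrix via its spectral decomposition. -/
def signMat {A : Matrix m m ℂ} (hA : A.IsHermitian) : Matrix m m ℂ :=
  hA.cfc (fun x => Real.sign x)

/-- The outer product `|ψ⟩⟨φ|`. -/
def outer (ψ φ : m → ℂ) : Matrix m m ℂ := Matrix.vecMulVec ψ (star φ)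

variable {α β : Type*} [Fintype α] [DecidableEq α] [Fintype β] [DecidableEq β]

/-- Partial trace over the first (A) factor. -/
def ptraceA (M : Matrix (α × β) (α × β) ℂ) : Matrix β β ℂ :=
  Matrix.of fun r r' => ∑ a, M (a, r) (a, r')

/-- Partial trace over the second (R) factor. -/
def ptraceR (M : Matrix (α × β) (α × β) ℂ) : Matrix α α ℂ :=
  Matrix.of fun a a' => ∑ r, M (a, r) (a', r)

set_option linter.unusedSectionVars false in
private lemma entry_eq_dot (M V : Matrix m m ℂ) (i : m) :
    (Vᴴ * M * V) i i = star (fun k => V k i) ⬝ᵥ (M *ᵥ fun k => V k i) := by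
  simp only [mul_apply, mulVec, dotProduct, conjTranspose_apply, Finset.sum_mul,
    Finset.mul_sum, Pi.star_apply]
  rw [Finset.sum_comm]
  congr 1; ext j; congr 1; ext k; ring

private lemma trace_conj_unitary (V : Matrix m m ℂ) (h : V ∈ Matrix.unitaryGroup m ℂ)
    (M : Matrix m m ℂ) : (Vᴴ * M * V).trace = M.trace := by
  rw [trace_mul_cycle, ← star_eq_conjTranspose, Matrix.mem_unitaryGroup_iff.mp h, one_mul]

/-- matrix Hölder, p = 1, q = ∞: `|Tr(BᴴA)| ≤ ‖A‖_∞ · ‖B‖₁`. -/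
theorem matrix_holder (A B : Matrix m m ℂ) :
    ‖(Bᴴ * A).trace‖ ≤ ‖A‖ * traceNorm B := by
  set hB := Matrix.posSemidef_conjTranspose_mul_self B with hBdef
  set h : (Bᴴ * B).IsHermitian := hB.1
  set V : Matrix m m ℂ := (h.eigenvectorUnitary : Matrix m m ℂ) with hV
  have hVmem : V ∈ Matrix.unitaryGroup m ℂ := (h.eigenvectorUnitary).2
  set v : m → EuclideanSpace ℂ m := fun i => (WithLp.equiv 2 _).symm (fun k => V k i) with hv
  have hVsV : Vᴴ * V = 1 := by
    rw [← star_eq_conjTranspose]; exact Matrix.mem_unitaryGroup_iff'.mp hVmem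
  have hdiag : Vᴴ * (Bᴴ * B) * V = diagonal (RCLike.ofReal ∘ h.eigenvalues) := by
    have := h.conjStarAlgAut_star_eigenvectorUnitary
    rwa [Unitary.conjStarAlgAut_star_apply, star_eq_conjTranspose] at this
  have hnormv : ∀ i, ‖v i‖ = 1 := by
    intro i
    have h1 : (inner ℂ (v i) (v i) : ℂ) = 1 := by
      rw [hv]
      rw [WithLp.equiv_symm_apply, EuclideanSpace.inner_toLp_toLp, dotProduct_comm]
      have hd : ((star fun k => V k i) ⬝ᵥ fun k => V k i) = (Vᴴ * V) i i := by
        simp [mul_apply, dotProduct, conjTranspose_apply]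
      rw [hd, hVsV, Matrix.one_apply_eq]
    have h2 := inner_self_eq_norm_sq (𝕜 := ℂ) (v i)
    rw [h1] at h2
    simp only [RCLike.one_re] at h2
    nlinarith [norm_nonneg (v i)]
  have hBv : ∀ i, ‖((WithLp.equiv 2 _).symm (B *ᵥ fun k => V k i) : EuclideanSpace ℂ m)‖
      = Real.sqrt (h.eigenvalues i) := by
    intro i
    have h1 : (inner ℂ ((WithLp.equiv 2 _).symm (B *ᵥ fun k => V k i) : EuclideanSpace ℂ m)
        ((WithLp.equiv 2 _).symm (B *ᵥ fun k => V k i)) : ℂ) = (h.eigenvalues i : ℂ) := by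
      rw [WithLp.equiv_symm_apply, EuclideanSpace.inner_toLp_toLp, dotProduct_comm,
        Matrix.star_mulVec, ← Matrix.dotProduct_mulVec,
        Matrix.mulVec_mulVec]
      rw [show star (fun k => V k i) ⬝ᵥ ((Bᴴ * B) *ᵥ fun k => V k i)
          = (Vᴴ * (Bᴴ * B) * V) i i from (entry_eq_dot _ _ _).symm, hdiag]
      simp [diagonal]
    have h2 := inner_self_eq_norm_sq (𝕜 := ℂ)
      ((WithLp.equiv 2 _).symm (B *ᵥ fun k => V k i) : EuclideanSpace ℂ m)
    rw [h1] at h2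
    have h3 : ‖((WithLp.equiv 2 _).symm (B *ᵥ fun k => V k i) : EuclideanSpace ℂ m)‖ ^ 2
        = h.eigenvalues i := by simpa using h2.symm
    rw [← h3, Real.sqrt_sq (norm_nonneg _)]
  -- trace norm identity
  have htn : traceNorm B = ∑ i, Real.sqrt (h.eigenvalues i) := by
    rw [traceNorm]
    rw [show hB.sqrt = V * diagonal ((↑) ∘ Real.sqrt ∘ h.eigenvalues) * Vᴴ from rfl]
    rw [trace_mul_cycle]
    rw [show Vᴴ * V = 1 from hVsV, one_mul, trace_diagonal]
    simp
  -- main estimate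
  have hkey : (Bᴴ * A).trace = ∑ i, (inner ℂ
      ((WithLp.equiv 2 _).symm (B *ᵥ fun k => V k i) : EuclideanSpace ℂ m)
      ((WithLp.equiv 2 _).symm (A *ᵥ fun k => V k i) : EuclideanSpace ℂ m) : ℂ) := by
    rw [← trace_conj_unitary V hVmem (Bᴴ * A), trace]
    congr 1; ext i
    rw [diag_apply, entry_eq_dot, WithLp.equiv_symm_apply, EuclideanSpace.inner_toLp_toLp,
        dotProduct_comm (A *ᵥ _),
      Matrix.star_mulVec, ← Matrix.dotProduct_mulVec, Matrix.mulVec_mulVec]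
  rw [hkey, htn, Finset.mul_sum]
  refine le_trans (norm_sum_le _ _) (Finset.sum_le_sum fun i _ => ?_)
  have h1 := norm_inner_le_norm (𝕜 := ℂ)
    ((WithLp.equiv 2 _).symm (B *ᵥ fun k => V k i) : EuclideanSpace ℂ m)
    ((WithLp.equiv 2 _).symm (A *ᵥ fun k => V k i) : EuclideanSpace ℂ m)
  rw [hBv i] at h1
  have h2 : ‖((WithLp.equiv 2 _).symm (A *ᵥ fun k => V k i) : EuclideanSpace ℂ m)‖
      ≤ ‖A‖ := by
    have := Matrix.l2_opNorm_mulVec A (v i)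
    rw [hnormv i, mul_one] at this
    exact this
  calc ‖_‖ ≤ Real.sqrt (h.eigenvalues i) *
        ‖((WithLp.equiv 2 _).symm (A *ᵥ fun k => V k i) : EuclideanSpace ℂ m)‖ := h1
    _ ≤ Real.sqrt (h.eigenvalues i) * ‖A‖ := by
        exact mul_le_mul_of_nonneg_left h2 (Real.sqrt_nonneg _)
    _ = ‖A‖ * Real.sqrt (h.eigenvalues i) := mul_comm _ _
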